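/- arXiv:1003.4995 — 9 statements merged into one kernel-verified Lean document; each statement's English description precedes it below -/
import Mathlib

section
/- Let γ > 0, δ > 0 and θ ∈ (0,1), and define f : [0,1] → ℝ by f(x) = ((γ + δθ)·x^θ − (γ + δ)·θ·x − γ·(1 − θ)) / (θ·(1 − θ)). Then f has exactly one root in the open interval (0,1); that is, there exists a unique x ∈ (0,1) with f(x) = 0. -/
open Set Filter Topology

private lemma no_two_roots (γ δ θ : ℝ) (hγ : 0 < γ) (hδ : 0 < δ)
    (hθ0 : 0 < θ) (hθ1 : θ < 1) {a b : ℝ} (ha : a ∈ Set.Ioo (0:ℝ) 1)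
    (hb : b ∈ Set.Ioo (0:ℝ) 1) (hab : a < b)
    (hga : (γ + δ * θ) * a ^ θ - (γ + δ) * θ * a - γ * (1 - θ) = 0)
    (hgb : (γ + δ * θ) * b ^ θ - (γ + δ) * θ * b - γ * (1 - θ) = 0) : False := by
  set t : ℝ := (b - a) / (1 - a) with ht
  have ha1 : a < 1 := ha.2
  have hden : (0:ℝ) < 1 - a := by linarith
  have ht0 : 0 < t := div_pos (by linarith) hden
  have ht1 : t < 1 := (div_lt_one hden).2 (by linarith [hb.2])
  have hcomb : (1 - t) * a + t * 1 = b := by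
    field_simp [ht]
    have h2 : t * (1 - a) = b - a := by rw [ht]; exact div_mul_cancel₀ _ hden.ne'
    linear_combination h2
  have hcon := (Real.strictConcaveOn_rpow hθ0 hθ1).2 (Set.mem_Ici.2 ha.1.le)
    (Set.mem_Ici.2 (zero_le_one)) (ne_of_lt ha1) (by linarith : (0:ℝ) < 1 - t) ht0
    (by ring)
  simp only [smul_eq_mul, Real.one_rpow, hcomb] at hcon
  -- hcon : (1 - t) * a ^ θ + t * 1 < b ^ θ
  have hpos : (0:ℝ) < γ + δ * θ := by positivity
  have H := mul_lt_mul_of_pos_left hcon hpos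
  have e1 : (1 - t) * ((γ + δ * θ) * a ^ θ - (γ + δ) * θ * a - γ * (1 - θ)) = 0 := by
    rw [hga]; ring
  have e2 : (γ + δ) * θ * b = (γ + δ) * θ * ((1 - t) * a + t * 1) := by rw [hcomb]
  nlinarith [H, e1, hgb, e2]

/-- For `γ > 0`, `δ > 0`, `θ ∈ (0,1)`, the function
`f(x) = ((γ + δθ)·x^θ − (γ + δ)·θ·x − γ·(1 − θ)) / (θ·(1 − θ))`
has exactly one root in `(0,1)`. -/
theorem exists_unique_root_f (γ δ θ : ℝ) (hγ : 0 < γ) (hδ : 0 < δ)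
    (hθ : θ ∈ Set.Ioo (0 : ℝ) 1) :
    ∃! x : ℝ, x ∈ Set.Ioo (0 : ℝ) 1 ∧
      ((γ + δ * θ) * x ^ θ - (γ + δ) * θ * x - γ * (1 - θ)) / (θ * (1 - θ)) = 0 := by
  obtain ⟨hθ0, hθ1⟩ := hθ
  have hden : θ * (1 - θ) ≠ 0 := (mul_pos hθ0 (by linarith)).ne'
  set g : ℝ → ℝ := fun x => (γ + δ * θ) * x ^ θ - (γ + δ) * θ * x - γ * (1 - θ) with hgdef
  have hiff : ∀ x : ℝ,
      ((γ + δ * θ) * x ^ θ - (γ + δ) * θ * x - γ * (1 - θ)) / (θ * (1 - θ)) = 0 ↔ g x = 0 := by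
    intro x
    rw [div_eq_zero_iff]
    simp [hden, hgdef]
  -- g 1 = 0
  have hg1 : g 1 = 0 := by simp [hgdef, Real.one_rpow]; ring
  -- g 0 < 0
  have hg0 : g 0 = -(γ * (1 - θ)) := by
    simp [hgdef, Real.zero_rpow hθ0.ne']
  have hg0neg : g 0 < 0 := by rw [hg0]; nlinarith
  -- derivative of g at 1
  have hd1 : HasDerivAt (fun x : ℝ => x ^ θ) (θ * (1:ℝ) ^ (θ - 1)) 1 :=
    Real.hasDerivAt_rpow_const (Or.inl one_ne_zero)
  have hgd : HasDerivAt g (δ * θ * (θ - 1)) 1 := by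
    have h := ((hd1.const_mul (γ + δ * θ)).sub
      ((hasDerivAt_id (1:ℝ)).const_mul ((γ + δ) * θ))).sub_const (γ * (1 - θ))
    have hval : (γ + δ * θ) * (θ * (1:ℝ) ^ (θ - 1)) - (γ + δ) * θ * 1 = δ * θ * (θ - 1) := by
      rw [Real.one_rpow]; ring
    rw [hval] at h
    exact h
  have hdneg : δ * θ * (θ - 1) < 0 := mul_neg_of_pos_of_neg (mul_pos hδ hθ0) (by linarith)
  -- find c ∈ (0,1) with g c > 0
  have hslope : Tendsto (slope g 1) (𝓝[≠] (1:ℝ)) (𝓝 (δ * θ * (θ - 1))) :=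
    hasDerivAt_iff_tendsto_slope.mp hgd
  have hslope' : Tendsto (slope g 1) (𝓝[<] (1:ℝ)) (𝓝 (δ * θ * (θ - 1))) :=
    hslope.mono_left (nhdsWithin_mono _ (fun x hx => ne_of_lt hx))
  have hev : ∀ᶠ c in 𝓝[<] (1:ℝ), slope g 1 c < 0 :=
    hslope'.eventually_lt_const hdneg
  have hmem : Set.Ioo (0:ℝ) 1 ∈ 𝓝[<] (1:ℝ) :=
    Ioo_mem_nhdsLT_of_mem ⟨zero_lt_one, le_refl 1⟩
  have hmem' : ∀ᶠ c in 𝓝[<] (1:ℝ), c ∈ Set.Ioo (0:ℝ) 1 := Filter.eventually_of_mem hmem fun _ h => h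
  obtain ⟨c, hcslope, hcIoo⟩ := (hev.and hmem').exists
  have hc1 : c - 1 < 0 := by linarith [hcIoo.2]
  rw [slope_def_field, hg1] at hcslope
  have hgc : 0 < g c := by
    rcases (div_neg_iff.mp hcslope) with ⟨h1, h2⟩ | ⟨h1, h2⟩
    · linarith
    · linarith
  -- continuity of g
  have hcont : Continuous g :=
    ((continuous_const.mul (Real.continuous_rpow_const hθ0.le)).sub
      (continuous_const.mul continuous_id)).sub continuous_const
  -- IVT on [0, c]
  have hivt := intermediate_value_Ioo (le_of_lt hcIoo.1) hcont.continuousOn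
  have h0mem : (0:ℝ) ∈ Set.Ioo (g 0) (g c) := ⟨hg0neg, hgc⟩
  obtain ⟨x, hxIoo, hgx⟩ := hivt h0mem
  have hxIoo1 : x ∈ Set.Ioo (0:ℝ) 1 := ⟨hxIoo.1, lt_trans hxIoo.2 hcIoo.2⟩
  refine ⟨x, ⟨hxIoo1, (hiff x).2 hgx⟩, ?_⟩
  rintro y ⟨hyIoo, hy0⟩
  have hgy : g y = 0 := (hiff y).1 hy0
  by_contra hne
  rcases lt_or_gt_of_ne hne with h | h
  · exact no_two_roots γ δ θ hγ hδ hθ0 hθ1 hyIoo hxIoo1 h hgy hgx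
  · exact no_two_roots γ δ θ hγ hδ hθ0 hθ1 hxIoo1 hyIoo h hgx hgy
end

section
/- Let γ > 0 and δ > 0, and define f₀ : (0,1] → ℝ by f₀(x) = (γ + δ)·(1 − x) + γ·log x. Then f₀ has exactly one root in the open interval (0,1); that is, there exists a unique x ∈ (0,1) with f₀(x) = 0. -/
/-- For `γ > 0`, `δ > 0`, the function
`f₀(x) = (γ + δ)·(1 − x) + γ·log x` has exactly one root in `(0,1)`. -/
theorem exists_unique_root_f0 (γ δ : ℝ) (hγ : 0 < γ) (hδ : 0 < δ) :
    ∃! x : ℝ, x ∈ Set.Ioo (0 : ℝ) 1 ∧ (γ + δ) * (1 - x) + γ * Real.log x = 0 := by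
  have hγδ : 0 < γ + δ := by linarith
  set f : ℝ → ℝ := fun x => (γ + δ) * (1 - x) + γ * Real.log x with hf
  set c : ℝ := γ / (γ + δ) with hc
  have hc0 : 0 < c := div_pos hγ hγδ
  have hc1 : c < 1 := (div_lt_one hγδ).2 (by linarith)
  have hcγ : (γ + δ) * c = γ := by rw [hc]; field_simp
  have hderiv : ∀ x : ℝ, 0 < x → HasDerivAt f (γ / x - (γ + δ)) x := by
    intro x hx
    have h1 : HasDerivAt (fun x : ℝ => (γ + δ) * (1 - x)) (-(γ + δ)) x := by
      simpa using ((hasDerivAt_id x).const_sub 1).const_mul (γ + δ)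
    have h2 : HasDerivAt (fun x : ℝ => γ * Real.log x) (γ * x⁻¹) x :=
      (Real.hasDerivAt_log (ne_of_gt hx)).const_mul γ
    have : HasDerivAt f (-(γ + δ) + γ * x⁻¹) x := h1.add h2
    convert this using 1
    ring
  have hcont : ContinuousOn f (Set.Ioi 0) := fun x hx =>
    ((hderiv x hx).continuousAt).continuousWithinAt
  -- strict monotone on (0, c]
  have hmono : StrictMonoOn f (Set.Ioc 0 c) := by
    apply strictMonoOn_of_deriv_pos (convex_Ioc 0 c)
    · exact hcont.mono (fun x hx => hx.1)
    · intro x hx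
      rw [interior_Ioc] at hx
      rw [(hderiv x hx.1).deriv]
      rw [sub_pos, lt_div_iff₀ hx.1]
      calc (γ + δ) * x < (γ + δ) * c := by nlinarith [hx.2]
        _ = γ := hcγ
  -- strict anti on [c, 1]
  have hanti : StrictAntiOn f (Set.Icc c 1) := by
    apply strictAntiOn_of_deriv_neg (convex_Icc c 1)
    · exact hcont.mono (fun x hx => Set.mem_Ioi.2 (lt_of_lt_of_le hc0 hx.1))
    · intro x hx
      rw [interior_Icc] at hx
      have hx0 : 0 < x := lt_trans hc0 hx.1
      rw [(hderiv x hx0).deriv]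
      rw [sub_neg, div_lt_iff₀ hx0]
      calc γ = (γ + δ) * c := hcγ.symm
        _ < (γ + δ) * x := by nlinarith [hx.1]
  have hf1 : f 1 = 0 := by simp [hf]
  have hfc : 0 < f c := by
    have hlog : Real.log (1 / c) < 1 / c - 1 :=
      Real.log_lt_sub_one_of_pos (by positivity) (by
        intro h
        rw [div_eq_one_iff_eq (ne_of_gt hc0)] at h
        exact absurd h.symm (ne_of_lt hc1))
    rw [Real.log_div one_ne_zero (ne_of_gt hc0), Real.log_one] at hlog
    have h1c : (1 : ℝ) / c = (γ + δ) / γ := by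
      rw [hc]; field_simp
    have : 1 - (γ + δ) / γ < Real.log c := by
      rw [h1c] at hlog; linarith
    have hgl : γ * (1 - (γ + δ) / γ) < γ * Real.log c :=
      (mul_lt_mul_iff_right₀ hγ).2 this
    have : γ * (1 - (γ + δ) / γ) = -δ := by field_simp; ring
    rw [this] at hgl
    have : (γ + δ) * (1 - c) = δ := by nlinarith [hcγ]
    simp only [hf]
    rw [this]
    linarith
  -- a point with negative value
  set a : ℝ := min (Real.exp (-(γ + δ + 1) / γ)) (c / 2) with ha
  have ha0 : 0 < a := lt_min (Real.exp_pos _) (by linarith)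
  have hac : a < c := lt_of_le_of_lt (min_le_right _ _) (by linarith)
  have hfa : f a < 0 := by
    have hle : a ≤ Real.exp (-(γ + δ + 1) / γ) := min_le_left _ _
    have hlog : Real.log a ≤ -(γ + δ + 1) / γ := by
      calc Real.log a ≤ Real.log (Real.exp (-(γ + δ + 1) / γ)) :=
            Real.log_le_log ha0 hle
        _ = -(γ + δ + 1) / γ := Real.log_exp _
    have hgl : γ * Real.log a ≤ -(γ + δ + 1) := by
      have := (mul_le_mul_iff_right₀ hγ).2 hlog
      rwa [mul_div_cancel₀ _ (ne_of_gt hγ)] at this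
    have : (γ + δ) * (1 - a) ≤ γ + δ := by nlinarith
    simp only [hf]
    linarith
  -- existence via IVT
  have hIVT := intermediate_value_Ioo (le_of_lt hac)
    (hcont.mono (fun x hx => Set.mem_Ioi.2 (lt_of_lt_of_le ha0 hx.1)))
  have h0mem : (0 : ℝ) ∈ Set.Ioo (f a) (f c) := ⟨hfa, hfc⟩
  obtain ⟨x₀, hx₀mem, hx₀⟩ := hIVT h0mem
  have hx₀1 : x₀ ∈ Set.Ioo (0 : ℝ) 1 :=
    ⟨lt_trans ha0 hx₀mem.1, lt_trans hx₀mem.2 hc1⟩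
  -- roots must lie in (0, c)
  have key : ∀ y : ℝ, y ∈ Set.Ioo (0 : ℝ) 1 → f y = 0 → y ∈ Set.Ioc (0 : ℝ) c := by
    intro y hy hfy
    refine ⟨hy.1, ?_⟩
    by_contra h
    push_neg at h
    have : f 1 < f y := hanti ⟨le_of_lt h, le_of_lt hy.2⟩ ⟨le_of_lt hc1, le_refl 1⟩ hy.2
    rw [hf1, hfy] at this
    exact lt_irrefl 0 this
  refine ⟨x₀, ⟨hx₀1, hx₀⟩, ?_⟩
  intro y ⟨hy, hfy⟩
  exact hmono.injOn (key y hy hfy) (key x₀ hx₀1 hx₀) (by show f y = f x₀; rw [hx₀]; exact hfy)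
end

section
/- Let γ > 0 and δ > 0, and define f₁ : (0,1] → ℝ by f₁(x) = −γ·(1 − x) − (γ + δ)·x·log x. Then f₁ has exactly one root in the open interval (0,1); that is, there exists a unique x ∈ (0,1) with f₁(x) = 0. -/
/-- For `γ > 0`, `δ > 0`, the function
`f₁(x) = −γ·(1 − x) − (γ + δ)·x·log x` has exactly one root in `(0,1)`. -/
theorem exists_unique_root_f1 (γ δ : ℝ) (hγ : 0 < γ) (hδ : 0 < δ) :
    ∃! x : ℝ, x ∈ Set.Ioo (0 : ℝ) 1 ∧
      -γ * (1 - x) - (γ + δ) * x * Real.log x = 0 := by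
  have hγδ : 0 < γ + δ := by linarith
  set g : ℝ → ℝ := fun x => γ - γ * x⁻¹ - (γ + δ) * Real.log x with hg
  set c : ℝ := γ / (γ + δ) with hc
  have hc0 : 0 < c := div_pos hγ hγδ
  have hc1 : c < 1 := (div_lt_one hγδ).mpr (by linarith)
  -- relation between f and g
  have hfg : ∀ x : ℝ, x ≠ 0 →
      -γ * (1 - x) - (γ + δ) * x * Real.log x = x * g x := by
    intro x hx
    simp only [hg]
    field_simp
    ring
  -- derivative of g
  have hderiv : ∀ x : ℝ, 0 < x →
      HasDerivAt g ((γ - (γ + δ) * x) / x ^ 2) x := by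
    intro x hx
    have h1 : HasDerivAt g (0 - γ * (-(x ^ 2)⁻¹) - (γ + δ) * x⁻¹) x :=
      ((hasDerivAt_const x γ).sub ((hasDerivAt_inv hx.ne').const_mul γ)).sub
        ((Real.hasDerivAt_log hx.ne').const_mul (γ + δ))
    convert h1 using 1
    field_simp
    ring
  have hcont : ∀ x : ℝ, 0 < x → ContinuousAt g x :=
    fun x hx => (hderiv x hx).continuousAt
  -- strict monotone on (0, c]
  have hmono : StrictMonoOn g (Set.Ioc 0 c) := by
    apply strictMonoOn_of_deriv_pos (convex_Ioc 0 c)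
      (fun x hx => (hcont x hx.1).continuousWithinAt)
    intro x hx
    rw [interior_Ioc] at hx
    rw [(hderiv x hx.1).deriv]
    apply div_pos _ (pow_pos hx.1 2)
    have : (γ + δ) * x < γ := by
      have := hx.2
      rw [hc, lt_div_iff₀ hγδ] at this
      linarith
    linarith
  -- strict anti on [c, 1]
  have hanti : StrictAntiOn g (Set.Icc c 1) := by
    apply strictAntiOn_of_deriv_neg (convex_Icc c 1)
      (fun x hx => (hcont x (lt_of_lt_of_le hc0 hx.1)).continuousWithinAt)
    intro x hx
    rw [interior_Icc] at hx
    have hx0 : 0 < x := lt_trans hc0 hx.1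
    rw [(hderiv x hx0).deriv]
    apply div_neg_of_neg_of_pos _ (pow_pos hx0 2)
    have : γ < (γ + δ) * x := by
      have := hx.1
      rw [hc, div_lt_iff₀ hγδ] at this
      linarith
    linarith
  have hg1 : g 1 = 0 := by simp [hg]
  -- g positive on [c, 1)
  have hpos : ∀ x : ℝ, x ∈ Set.Ico c 1 → 0 < g x := by
    intro x hx
    have := hanti (Set.mem_Icc.mpr ⟨hx.1, hx.2.le⟩)
      (Set.mem_Icc.mpr ⟨(le_of_lt (lt_of_le_of_lt hx.1 hx.2)), le_rfl⟩) hx.2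
    rw [hg1] at this
    linarith
  -- the point a where g is negative
  set u : ℝ := 3 * (γ + δ) / γ + 1 with hu
  have hu1 : 1 < u := by
    have h3 : 0 < 3 * (γ + δ) / γ := by positivity
    simp only [hu]
    linarith
  have hgu : γ * u = 3 * (γ + δ) + γ := by
    rw [hu]; field_simp
  set a : ℝ := (u ^ 2)⁻¹ with ha
  have ha0 : 0 < a := by positivity
  have hac : a < c := by
    have h1 : (γ + δ) / γ < u := by
      rw [div_lt_iff₀ hγ]
      nlinarith
    have h2 : u < u ^ 2 := by nlinarith
    have h3 : γ / (γ + δ) = ((γ + δ) / γ)⁻¹ := by rw [inv_div]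
    rw [ha, hc, h3]
    gcongr
    exact h1.trans h2
  have hga : g a < 0 := by
    have hlog : Real.log a = -(2 * Real.log u) := by
      rw [ha, Real.log_inv, Real.log_pow]
      push_cast; ring
    have hlu : Real.log u ≤ u - 1 := Real.log_le_sub_one_of_pos (by linarith)
    have hainv : a⁻¹ = u ^ 2 := by rw [ha, inv_inv]
    simp only [hg]
    rw [hlog, hainv]
    have h3 : γ * u ^ 2 = (3 * (γ + δ) + γ) * u := by
      rw [← hgu]; ring
    nlinarith [mul_le_mul_of_nonneg_left hlu hγδ.le, h3, hu1,
      mul_pos (show (0:ℝ) < 2 * γ + δ by linarith) (sub_pos.mpr hu1)]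
  have hgc : 0 < g c := hpos c ⟨le_rfl, hc1⟩
  -- IVT
  have hsub : Set.Ioo (g a) (g c) ⊆ g '' Set.Ioo a c :=
    intermediate_value_Ioo hac.le
      (fun x hx => (hcont x (lt_of_lt_of_le ha0 hx.1)).continuousWithinAt)
  obtain ⟨x₀, hx₀mem, hgx₀⟩ := hsub ⟨hga, hgc⟩
  have hx₀0 : 0 < x₀ := lt_trans ha0 hx₀mem.1
  have hx₀c : x₀ < c := hx₀mem.2
  have hx₀1 : x₀ < 1 := lt_trans hx₀c hc1
  refine ⟨x₀, ⟨⟨hx₀0, hx₀1⟩, ?_⟩, ?_⟩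
  · rw [hfg x₀ hx₀0.ne', hgx₀, mul_zero]
  · rintro y ⟨⟨hy0, hy1⟩, hy⟩
    rw [hfg y hy0.ne'] at hy
    have hgy : g y = 0 := by
      rcases mul_eq_zero.mp hy with h | h
      · exact absurd h hy0.ne'
      · exact h
    have hyc : y < c := by
      by_contra h
      push_neg at h
      exact absurd hgy (hpos y ⟨h, hy1⟩).ne'
    exact hmono.injOn ⟨hy0, hyc.le⟩ ⟨hx₀0, hx₀c.le⟩ (hgy.trans hgx₀.symm)
end

section
/- Let γ > 0 and δ > 0, set h = 1 + δ/γ, and let x₀ be the unique root in (0,1) of f₀(x) = (γ + δ)·(1 − x) + γ·log x. Then h·x₀ < 1 and (−h·x₀)·exp(−h·x₀) = −h·exp(−h). (Equivalently, −h·x₀ equals the value of the principal branch W₀ of the Lambert W function at −h·e^{−h}.) -/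
/-- With `h = 1 + δ/γ` and `x₀` the unique root in `(0,1)` of
`f₀(x) = (γ + δ)(1 − x) + γ log x`, one has `h·x₀ < 1` and
`(−h·x₀)·exp(−h·x₀) = −h·exp(−h)`, i.e. `−h·x₀ = W₀(−h·e^{−h})`. -/
theorem root_f0_lambertW (γ δ h x₀ : ℝ) (hγ : 0 < γ) (hδ : 0 < δ)
    (hh : h = 1 + δ / γ)
    (hx₀ : x₀ ∈ Set.Ioo (0 : ℝ) 1)
    (hroot : (γ + δ) * (1 - x₀) + γ * Real.log x₀ = 0) :
    h * x₀ < 1 ∧ (-(h * x₀)) * Real.exp (-(h * x₀)) = -h * Real.exp (-h) := by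
  obtain ⟨hx0, hx1⟩ := hx₀
  have h1 : 1 < h := by
    rw [hh]; nlinarith [div_pos hδ hγ]
  have hhpos : 0 < h := by linarith
  have hlog : Real.log x₀ = h * x₀ - h := by
    have : γ * Real.log x₀ = (γ + δ) * (x₀ - 1) := by linarith
    have hγδ : γ + δ = γ * h := by rw [hh]; field_simp
    rw [hγδ] at this
    have := mul_left_cancel₀ (ne_of_gt hγ) (by linarith : γ * Real.log x₀ = γ * (h * x₀ - h))
    exact this
  constructor
  · by_contra hle
    push_neg at hle
    have hinv : 1 / h ≤ x₀ := by rw [div_le_iff₀ hhpos] at *; linarith [mul_comm x₀ h]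
    have hanti : StrictAntiOn (fun x : ℝ => Real.log x - h * x) (Set.Icc (1/h) 1) := by
      apply strictAntiOn_of_deriv_neg (convex_Icc _ _)
      · apply ContinuousOn.sub
        · exact Real.continuousOn_log.mono (fun x hx => by
            have := hx.1
            have : (0:ℝ) < x := lt_of_lt_of_le (by positivity) this
            exact ne_of_gt this)
        · exact (continuous_const.mul continuous_id).continuousOn
      · intro x hx
        rw [interior_Icc] at hx
        obtain ⟨hx1', hx2'⟩ := hx
        have hxpos : 0 < x := lt_trans (by positivity) hx1'
        rw [deriv_fun_sub (Real.differentiableAt_log (ne_of_gt hxpos))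
            (by fun_prop), Real.deriv_log, deriv_const_mul _ differentiableAt_fun_id]
        simp only [deriv_id'', mul_one]
        have : 1 / x < h := by
          rw [div_lt_iff₀ hxpos]
          rw [div_lt_iff₀ hhpos] at hx1'
          linarith [mul_comm h x]
        have hxi : x⁻¹ = 1 / x := (one_div x).symm
        rw [hxi]; linarith
    have hmem1 : x₀ ∈ Set.Icc (1/h) 1 := ⟨hinv, le_of_lt hx1⟩
    have hmem2 : (1:ℝ) ∈ Set.Icc (1/h) 1 := ⟨by rw [div_le_iff₀ hhpos]; linarith, le_refl 1⟩
    have := hanti hmem1 hmem2 hx1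
    simp only [Real.log_one] at this
    rw [hlog] at this
    linarith
  · have hx₀exp : x₀ = Real.exp (h * x₀ - h) := by
      rw [← hlog, Real.exp_log hx0]
    calc (-(h * x₀)) * Real.exp (-(h * x₀))
        = -h * (x₀ * Real.exp (-(h * x₀))) := by ring
      _ = -h * (Real.exp (h * x₀ - h) * Real.exp (-(h * x₀))) := by rw [← hx₀exp]
      _ = -h * Real.exp (-h) := by rw [← Real.exp_add]; ring_nf
end

section
/- Let γ > 0 and δ > 0, set h = 1 + δ/γ, and let x₁ be the unique root in (0,1) of f₁(x) = −γ·(1 − x) − (γ + δ)·x·log x. Then h·x₁ < 1 and (−1/(h·x₁))·exp(−1/(h·x₁)) = −exp(−1/h)/h. (Equivalently, −1/(h·x₁) equals the value of the lower real branch W₋₁ of the Lambert W function at −e^{−1/h}/h.) -/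
/-- With `h = 1 + δ/γ` and `x₁` the unique root in `(0,1)` of
`f₁(x) = −γ(1 − x) − (γ + δ)·x·log x`, one has `h·x₁ < 1` and
`(−1/(h·x₁))·exp(−1/(h·x₁)) = −exp(−1/h)/h`, i.e. `−1/(h·x₁) = W₋₁(−e^{−1/h}/h)`. -/
theorem root_f1_lambertW (γ δ h x₁ : ℝ) (hγ : 0 < γ) (hδ : 0 < δ)
    (hh : h = 1 + δ / γ)
    (hx₁ : x₁ ∈ Set.Ioo (0 : ℝ) 1)
    (hroot : -γ * (1 - x₁) - (γ + δ) * x₁ * Real.log x₁ = 0) :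
    h * x₁ < 1 ∧
    (-(1 / (h * x₁))) * Real.exp (-(1 / (h * x₁))) = -Real.exp (-(1 / h)) / h := by
  obtain ⟨hx0, hx1⟩ := hx₁
  have hγδ : 0 < γ + δ := by linarith
  have hh' : h = (γ + δ) / γ := by rw [hh]; field_simp
  have hne : h ≠ 0 := by rw [hh']; positivity
  have hxne : x₁ ≠ 0 := ne_of_gt hx0
  have hlog : Real.log x₁ < x₁ - 1 := Real.log_lt_sub_one_of_pos hx0 (ne_of_lt hx1)
  have h1 : h * x₁ < 1 := by
    rw [hh']
    rw [div_mul_eq_mul_div, div_lt_one hγ]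
    nlinarith [mul_pos hγδ hx0]
  refine ⟨h1, ?_⟩
  have hlogeq : Real.log x₁ = 1 / h - 1 / (h * x₁) := by
    rw [hh']
    field_simp
    nlinarith [hroot]
  have hexp : Real.exp (-(1 / (h * x₁))) = x₁ * Real.exp (-(1 / h)) := by
    conv_rhs => rw [← Real.exp_log hx0, ← Real.exp_add, hlogeq]
    ring_nf
  rw [hexp]
  field_simp
end

section
/- Let γ > 0, δ > 0 and θ ∈ (0,1), and define f : [0,1] → ℝ by f(x) = ((γ + δθ)·x^θ − (γ + δ)·θ·x − γ·(1 − θ)) / (θ·(1 − θ)). Then f(γ/(γ + δ)) > 0, and consequently the unique root x∞ of f in (0,1) satisfies x∞ < γ/(γ + δ). -/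
theorem key_ineq (γ δ θ : ℝ) (hγ : 0 < γ) (hδ : 0 < δ)
    (hθ : θ ∈ Set.Ioo (0 : ℝ) 1) :
    γ < (γ + δ * θ) * (γ / (γ + δ)) ^ θ := by
  obtain ⟨hθ0, hθ1⟩ := hθ
  have hγδ : 0 < γ + δ := by linarith
  have hdg : 0 < δ / γ := div_pos hδ hγ
  have hber := rpow_one_add_lt_one_add_mul_self (s := δ / γ)
    (by linarith : (-1 : ℝ) ≤ δ / γ) hdg.ne' hθ0 hθ1
  have h1 : (1 : ℝ) + δ / γ = (γ + δ) / γ := by field_simp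
  have h2 : (1 : ℝ) + θ * (δ / γ) = (γ + δ * θ) / γ := by field_simp
  rw [h1, h2] at hber
  have hpowpos : (0 : ℝ) < ((γ + δ) / γ) ^ θ := Real.rpow_pos_of_pos (by positivity) θ
  have hinv : (γ / (γ + δ)) ^ θ = (((γ + δ) / γ) ^ θ)⁻¹ := by
    rw [← Real.inv_rpow (by positivity)]
    congr 1
    field_simp
  rw [hinv]
  have hnum : 0 < γ + δ * θ := by positivity
  rw [lt_mul_inv_iff₀ hpowpos]
  calc γ * ((γ + δ) / γ) ^ θ < γ * ((γ + δ * θ) / γ) := by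
        exact (mul_lt_mul_iff_right₀ hγ).mpr hber
    _ = γ + δ * θ := by field_simp

/-- `f(γ/(γ + δ)) > 0`, and consequently the unique root `x∞` of
`f` in `(0,1)` satisfies `x∞ < γ/(γ + δ)`. -/
theorem root_f_lt (γ δ θ : ℝ) (hγ : 0 < γ) (hδ : 0 < δ)
    (hθ : θ ∈ Set.Ioo (0 : ℝ) 1) :
    ((γ + δ * θ) * (γ / (γ + δ)) ^ θ - (γ + δ) * θ * (γ / (γ + δ)) - γ * (1 - θ)) /
        (θ * (1 - θ)) > 0 ∧
    ∀ x ∈ Set.Ioo (0 : ℝ) 1,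
      ((γ + δ * θ) * x ^ θ - (γ + δ) * θ * x - γ * (1 - θ)) / (θ * (1 - θ)) = 0 →
        x < γ / (γ + δ) := by
  obtain ⟨hθ0, hθ1⟩ := hθ
  have hγδ : 0 < γ + δ := by linarith
  set p : ℝ := γ / (γ + δ) with hp
  have hp0 : 0 < p := by positivity
  have hp1 : p < 1 := (div_lt_one hγδ).mpr (by linarith)
  have hkey : γ < (γ + δ * θ) * p ^ θ := key_ineq γ δ θ hγ hδ ⟨hθ0, hθ1⟩
  have hlinp : (γ + δ) * θ * p = γ * θ := by rw [hp]; field_simp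
  have hgp : 0 < (γ + δ * θ) * p ^ θ - (γ + δ) * θ * p - γ * (1 - θ) := by
    rw [hlinp]; linarith
  have hden : 0 < θ * (1 - θ) := by nlinarith
  constructor
  · exact div_pos hgp hden
  · rintro x ⟨hx0, hx1⟩ hroot
    by_contra hcon
    push_neg at hcon  -- p ≤ x
    have hgx : (γ + δ * θ) * x ^ θ - (γ + δ) * θ * x - γ * (1 - θ) = 0 := by
      have := (div_eq_zero_iff.mp hroot)
      rcases this with h | h
      · exact h
      · exact absurd h hden.ne'
    -- concavity chord: x = σ p + τ * 1
    have h1p : 0 < 1 - p := by linarith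
    set σ : ℝ := (1 - x) / (1 - p) with hσ
    set τ : ℝ := (x - p) / (1 - p) with hτ
    have hσpos : 0 < σ := div_pos (by linarith) h1p
    have hτ0 : 0 ≤ τ := div_nonneg (by linarith) h1p.le
    have h1p' : (1 : ℝ) - p ≠ 0 := h1p.ne'
    have hστ : σ + τ = 1 := by rw [hσ, hτ]; field_simp; ring
    have hx : σ * p + τ = x := by rw [hσ, hτ]; field_simp; ring
    have hcc := (Real.concaveOn_rpow hθ0.le hθ1.le).2
      (Set.mem_Ici.mpr hp0.le) (Set.mem_Ici.mpr zero_le_one) hσpos.le hτ0 hστ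
    simp only [smul_eq_mul, Real.one_rpow, mul_one] at hcc
    rw [hx] at hcc
    -- hcc : σ * p ^ θ + τ ≤ x ^ θ
    have hmul : (γ + δ * θ) * (σ * p ^ θ + τ) ≤ (γ + δ * θ) * x ^ θ := by
      apply mul_le_mul_of_nonneg_left hcc (by positivity)
    have hg1 : (γ + δ * θ) * 1 - (γ + δ) * θ * 1 - γ * (1 - θ) = 0 := by ring
    have hσgp : 0 < σ * ((γ + δ * θ) * p ^ θ - (γ + δ) * θ * p - γ * (1 - θ)) :=
      mul_pos hσpos hgp
    have e1 : (γ + δ) * θ * x = (γ + δ) * θ * (σ * p + τ) := by rw [hx]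
    have e2 : γ * (1 - θ) = γ * (1 - θ) * (σ + τ) := by rw [hστ]; ring
    linarith [hmul, hσgp, e1, e2, hgx]
end

section
/- Let γ > 0 and δ > 0. Then the function θ ↦ (γ/(γ + δθ))^{1/θ} is strictly increasing on the interval (0, 1]. In particular, for every θ ∈ (0,1), (γ/(γ + δθ))^{1/θ} < γ/(γ + δ). -/
open Real

lemma key_aux (γ δ : ℝ) (hγ : 0 < γ) (hδ : 0 < δ) {a b : ℝ} (ha : 0 < a) (hab : a < b) :
    (γ / (γ + δ * a)) ^ (1 / a) < (γ / (γ + δ * b)) ^ (1 / b) := by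
  have hb : 0 < b := ha.trans hab
  have hda : 0 < γ + δ * a := by positivity
  have hdb : 0 < γ + δ * b := by positivity
  have hc : (0:ℝ) < γ / (γ + δ * a) := by positivity
  have hp : 1 < b / a := (one_lt_div ha).mpr hab
  have hs : (0:ℝ) < δ * a / γ := by positivity
  -- Bernoulli
  have bern : 1 + (b / a) * (δ * a / γ) < (1 + δ * a / γ) ^ (b / a) :=
    one_add_mul_self_lt_rpow_one_add (by linarith) hs.ne' hp
  have h1 : 1 + (b / a) * (δ * a / γ) = (γ + δ * b) / γ := by
    field_simp
  have h2 : 1 + δ * a / γ = (γ + δ * a) / γ := by field_simp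
  have key : (γ + δ * b) / γ < ((γ + δ * a) / γ) ^ (b / a) := by
    rw [← h1, ← h2]; exact bern
  -- invert
  have key2 : (γ / (γ + δ * a)) ^ (b / a) < γ / (γ + δ * b) := by
    have e : γ / (γ + δ * a) = ((γ + δ * a) / γ)⁻¹ := by
      field_simp
    have e2 : γ / (γ + δ * b) = ((γ + δ * b) / γ)⁻¹ := by
      field_simp
    rw [e, e2, Real.inv_rpow (by positivity)]
    exact inv_strictAnti₀ (by positivity) key
  have e3 : (γ / (γ + δ * a)) ^ (1 / a) = ((γ / (γ + δ * a)) ^ (b / a)) ^ (1 / b) := by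
    rw [← Real.rpow_mul hc.le]
    congr 1
    field_simp
  rw [e3]
  exact Real.rpow_lt_rpow (by positivity) key2 (by positivity)

/-- The function `θ ↦ (γ/(γ + δθ))^(1/θ)` is strictly increasing
on `(0,1]`; in particular it is `< γ/(γ + δ)` for `θ ∈ (0,1)`. -/
theorem strictMonoOn_aux (γ δ : ℝ) (hγ : 0 < γ) (hδ : 0 < δ) :
    StrictMonoOn (fun θ : ℝ => (γ / (γ + δ * θ)) ^ (1 / θ)) (Set.Ioc 0 1) ∧
    ∀ θ ∈ Set.Ioo (0 : ℝ) 1, (γ / (γ + δ * θ)) ^ (1 / θ) < γ / (γ + δ) := by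
  constructor
  · intro a ha b hb hab
    exact key_aux γ δ hγ hδ ha.1 hab
  · intro θ hθ
    have := key_aux γ δ hγ hδ hθ.1 hθ.2
    simpa using this
end

section
/- Let γ > 0 and δ > 0, and fix x ∈ (0,1]. Then the limit as θ → 1⁻ of ((γ + δθ)·x^θ − (γ + δ)·θ·x − γ·(1 − θ)) / (θ·(1 − θ)) equals −γ·(1 − x) − (γ + δ)·x·log x. -/
open Filter Topology

/-- For fixed `x ∈ (0,1]`, as `θ → 1⁻` (through `(0,1)`),
`((γ + δθ)·x^θ − (γ + δ)·θ·x − γ·(1 − θ)) / (θ·(1 − θ)) → −γ(1 − x) − (γ + δ)·x·log x`. -/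
theorem limit_theta_one (γ δ x : ℝ) (hγ : 0 < γ) (hδ : 0 < δ)
    (hx : x ∈ Set.Ioc (0 : ℝ) 1) :
    Tendsto
      (fun θ : ℝ =>
        ((γ + δ * θ) * x ^ θ - (γ + δ) * θ * x - γ * (1 - θ)) / (θ * (1 - θ)))
      (𝓝[Set.Ioo (0 : ℝ) 1] 1)
      (𝓝 (-γ * (1 - x) - (γ + δ) * x * Real.log x)) := by
  have hx0 : 0 < x := hx.1
  set f : ℝ → ℝ := fun θ => (γ + δ * θ) * x ^ θ - (γ + δ) * θ * x - γ * (1 - θ) with hf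
  set d : ℝ := δ * 1 * x ^ (1 : ℝ) + (γ + δ * 1) * (x ^ (1 : ℝ) * Real.log x)
      - ((γ + δ) * 1 * x + 0) - γ * (0 - 1) with hd
  have hderiv : HasDerivAt f d 1 := by
    have h1 : HasDerivAt (fun θ : ℝ => x ^ θ) (x ^ (1 : ℝ) * Real.log x) 1 :=
      (Real.hasStrictDerivAt_const_rpow hx0 1).hasDerivAt
    have h2 : HasDerivAt (fun θ : ℝ => γ + δ * θ) δ 1 := by
      simpa using ((hasDerivAt_id (1 : ℝ)).const_mul δ).const_add γ
    have h3 : HasDerivAt (fun θ : ℝ => (γ + δ) * θ * x + 0) ((γ + δ) * 1 * x + 0) 1 := by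
      simpa using (((hasDerivAt_id (1 : ℝ)).const_mul (γ + δ)).mul_const x).add_const 0
    have h4 : HasDerivAt (fun θ : ℝ => γ * (1 - θ)) (γ * (0 - 1)) 1 :=
      ((hasDerivAt_const (1 : ℝ) (1 : ℝ)).sub (hasDerivAt_id 1)).const_mul γ
    have := ((h2.mul h1).sub h3).sub h4
    refine (this.congr_deriv ?_).congr_of_eventuallyEq (Filter.Eventually.of_forall fun θ => ?_)
    · rw [hd]
      ring
    · simp only [hf, Pi.mul_apply, Pi.sub_apply, add_zero]
  have hf1 : f 1 = 0 := by
    simp [hf, Real.rpow_one]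
  have hslope : Tendsto (fun θ : ℝ => f θ / (θ - 1)) (𝓝[≠] (1 : ℝ)) (𝓝 d) := by
    have := hasDerivAt_iff_tendsto_slope.mp hderiv
    refine this.congr' ?_
    filter_upwards [self_mem_nhdsWithin] with θ hθ
    simp [slope, hf1, div_eq_inv_mul]
  have hle : 𝓝[Set.Ioo (0 : ℝ) 1] (1 : ℝ) ≤ 𝓝[≠] (1 : ℝ) :=
    nhdsWithin_mono 1 (fun y hy => ne_of_lt hy.2)
  have hslope' : Tendsto (fun θ : ℝ => f θ / (θ - 1)) (𝓝[Set.Ioo (0 : ℝ) 1] 1) (𝓝 d) :=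
    hslope.mono_left hle
  have hinv : Tendsto (fun θ : ℝ => -(1 / θ)) (𝓝[Set.Ioo (0 : ℝ) 1] 1) (𝓝 (-1)) := by
    have h : Tendsto (fun θ : ℝ => -(1 / θ)) (𝓝 (1 : ℝ)) (𝓝 (-(1 / 1))) :=
      (tendsto_const_nhds.div tendsto_id one_ne_zero).neg
    simpa using h.mono_left nhdsWithin_le_nhds
  have key := hslope'.mul hinv
  have heq : ∀ᶠ θ in 𝓝[Set.Ioo (0 : ℝ) 1] (1 : ℝ),
      (f θ / (θ - 1)) * (-(1 / θ)) = f θ / (θ * (1 - θ)) := by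
    filter_upwards [self_mem_nhdsWithin] with θ hθ
    have h0 : θ ≠ 0 := ne_of_gt hθ.1
    have h1 : θ - 1 ≠ 0 := by intro h; nlinarith [hθ.2]
    have h2 : 1 - θ ≠ 0 := by intro h; nlinarith [hθ.2]
    have e1 : -(1 / θ) = (-1) / θ := by ring
    rw [e1, div_mul_div_comm, div_eq_div_iff (mul_ne_zero h1 h0) (mul_ne_zero h0 h2)]
    ring
  have := (key.congr' heq)
  convert this using 2
  · rw [hd]
    simp [Real.rpow_one]
    ring
end

section
/- Let γ > 0, δ > 0 and θ ∈ (0,1), define f : [0,1] → ℝ by f(x) = ((γ + δθ)·x^θ − (γ + δ)·θ·x − γ·(1 − θ)) / (θ·(1 − θ)), and let x∞ be its unique root in (0,1). Then f(x) < 0 for all x ∈ (0, x∞) and f(x) > 0 for all x ∈ (x∞, 1). -/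
/-- If `x∞ ∈ (0,1)` is the root of `f`, then `f < 0` on `(0, x∞)`
and `f > 0` on `(x∞, 1)`. -/
theorem f_sign (γ δ θ xinf : ℝ) (hγ : 0 < γ) (hδ : 0 < δ)
    (hθ : θ ∈ Set.Ioo (0 : ℝ) 1)
    (hxinf : xinf ∈ Set.Ioo (0 : ℝ) 1)
    (hroot : ((γ + δ * θ) * xinf ^ θ - (γ + δ) * θ * xinf - γ * (1 - θ)) /
        (θ * (1 - θ)) = 0) :
    (∀ x ∈ Set.Ioo (0 : ℝ) xinf,
      ((γ + δ * θ) * x ^ θ - (γ + δ) * θ * x - γ * (1 - θ)) / (θ * (1 - θ)) < 0) ∧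
    (∀ x ∈ Set.Ioo xinf (1 : ℝ),
      ((γ + δ * θ) * x ^ θ - (γ + δ) * θ * x - γ * (1 - θ)) / (θ * (1 - θ)) > 0) := by
  obtain ⟨hθ0, hθ1⟩ := hθ
  obtain ⟨hx0, hx1⟩ := hxinf
  have hD : (0 : ℝ) < θ * (1 - θ) := by nlinarith
  set g : ℝ → ℝ := fun x => (γ + δ * θ) * x ^ θ - (γ + δ) * θ * x - γ * (1 - θ) with hg
  have hginf : g xinf = 0 := by
    have := hroot
    field_simp at this
    simp only [hg]; linarith [this]
  have hg1 : g 1 = 0 := by simp [hg, Real.one_rpow]; ring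
  have hA : (0 : ℝ) < γ + δ * θ := by nlinarith
  -- strict concavity key inequality
  have key : ∀ a b t s : ℝ, 0 ≤ a → 0 ≤ b → a ≠ b → 0 < t → 0 < s → t + s = 1 →
      t * g a + s * g b < g (t * a + s * b) := by
    intro a b t s ha hb hab ht hs hts
    have hr := (Real.strictConcaveOn_rpow hθ0 hθ1).2 ha hb hab ht hs hts
    simp only [smul_eq_mul] at hr
    have hsub : s = 1 - t := by linarith
    subst hsub
    simp only [hg]
    have hmul := mul_lt_mul_of_pos_left hr hA
    nlinarith [hmul]
  constructor
  · intro x ⟨hx0', hxlt⟩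
    have hx1' : x < 1 := lt_trans hxlt hx1
    have h1x : (0:ℝ) < 1 - x := by linarith
    have hne : (1:ℝ) - x ≠ 0 := ne_of_gt h1x
    have ht : 0 < (1 - xinf) / (1 - x) := div_pos (by linarith) h1x
    have hs : 0 < (xinf - x) / (1 - x) := div_pos (by linarith) h1x
    have hts : (1 - xinf) / (1 - x) + (xinf - x) / (1 - x) = 1 := by field_simp; ring
    have hcomb : (1 - xinf) / (1 - x) * x + (xinf - x) / (1 - x) * 1 = xinf := by
      field_simp; ring
    have hk := key x 1 ((1 - xinf) / (1 - x)) ((xinf - x) / (1 - x))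
      (le_of_lt hx0') zero_le_one (by linarith) ht hs hts
    rw [hcomb, hginf, hg1] at hk
    simp only [mul_zero, add_zero] at hk
    have hlt : g x < 0 := by
      by_contra h
      push_neg at h
      have := mul_nonneg ht.le h
      linarith
    exact div_neg_of_neg_of_pos hlt hD
  · intro x ⟨hxgt, hx1'⟩
    have hx0' : 0 < x := lt_trans hx0 hxgt
    have h1x : (0:ℝ) < 1 - xinf := by linarith
    have hne : (1:ℝ) - xinf ≠ 0 := ne_of_gt h1x
    have ht : 0 < (1 - x) / (1 - xinf) := div_pos (by linarith) h1x
    have hs : 0 < (x - xinf) / (1 - xinf) := div_pos (by linarith) h1x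
    have hts : (1 - x) / (1 - xinf) + (x - xinf) / (1 - xinf) = 1 := by field_simp; ring
    have hcomb : (1 - x) / (1 - xinf) * xinf + (x - xinf) / (1 - xinf) * 1 = x := by
      field_simp; ring
    have hk := key xinf 1 ((1 - x) / (1 - xinf)) ((x - xinf) / (1 - xinf))
      (le_of_lt hx0) zero_le_one (by linarith) ht hs hts
    rw [hcomb, hginf, hg1] at hk
    simp only [mul_zero, add_zero, zero_add] at hk
    have hgt : 0 < g x := hk
    exact div_pos hgt hD
end
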